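/- For all integers H ≥ 1 and 1 ≤ j ≤ H, if weights are defined by w^{(j,H+1-j)} = 1/C(H-1, j-1), then the recursion w^{(j,k-j+1)} = c·(w^{(j+1,k-j+1)} + w^{(j,k-j+2)}) with any fixed constant c > 0 propagated downward preserves the ratio identity w^{(j+1,k-j)} / w^{(j,k-j+1)} = j/(k-j) for all 1 ≤ k ≤ H and 1 ≤ j ≤ k-1. -/

import Mathlib

/-- The downward recursion w^{(a,b)} = c·(w^{(a+1,b)} + w^{(a,b+1)}) with base case
w^{(j,H+1-j)} = 1/C(H-1,j-1) preserves the ratio identity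
w^{(j+1,k-j)}/w^{(j,k-j+1)} = j/(k-j) for all 1 ≤ k ≤ H and 1 ≤ j ≤ k-1. -/
theorem stmt3 (H : ℕ) (hH : 1 ≤ H) (c : ℝ) (hc : 0 < c)
    (w : ℕ → ℕ → ℝ)
    (hpos : ∀ a b : ℕ, 1 ≤ a + b → a + b ≤ H + 1 → 0 < w a b)
    (hbase : ∀ j : ℕ, 1 ≤ j → j ≤ H →
      w j (H + 1 - j) = 1 / (Nat.choose (H - 1) (j - 1) : ℝ))
    (hrec : ∀ a b : ℕ, 1 ≤ a + b → a + b ≤ H →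
      w a b = c * (w (a + 1) b + w a (b + 1))) :
    ∀ k j : ℕ, 1 ≤ k → k ≤ H → 1 ≤ j → j ≤ k - 1 →
      w (j + 1) (k - j) / w j (k - j + 1) = (j : ℝ) / ((k : ℝ) - (j : ℝ)) := by
  have aux : ∀ d k : ℕ, 1 ≤ k → k + d = H →
      ∃ l : ℝ, 0 < l ∧ ∀ j, 1 ≤ j → j ≤ k →
        w j (k + 1 - j) = l / (Nat.choose (k - 1) (j - 1) : ℝ) := by
    intro d
    induction d with
    | zero =>
      intro k hk hkH
      refine ⟨1, one_pos, ?_⟩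
      intro j hj hjk
      have hkH' : k = H := by omega
      subst hkH'
      exact hbase j hj hjk
    | succ d ih =>
      intro k hk hkH
      obtain ⟨l, hl, hw⟩ := ih (k + 1) (by omega) (by omega)
      have hkpos : (0:ℝ) < k := by exact_mod_cast hk
      refine ⟨c * l * (k + 1) / k, by positivity, ?_⟩
      intro j hj hjk
      have hrec' := hrec j (k + 1 - j) (by omega) (by omega)
      have e1 : w (j + 1) (k + 1 - j) = l / (Nat.choose k j : ℝ) := by
        have h1 : k + 1 + 1 - (j + 1) = k + 1 - j := by omega
        have := hw (j + 1) (by omega) (by omega)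
        rw [h1] at this
        simpa using this
      have e2 : w j (k + 1 - j + 1) = l / (Nat.choose k (j - 1) : ℝ) := by
        have h2 : k + 1 + 1 - j = k + 1 - j + 1 := by omega
        have := hw j hj (by omega)
        rw [h2] at this
        simpa using this
      rw [hrec', e1, e2]
      have hA : 0 < Nat.choose (k - 1) (j - 1) := Nat.choose_pos (by omega)
      have hB : 0 < Nat.choose k (j - 1) := Nat.choose_pos (by omega)
      have hD : 0 < Nat.choose k j := Nat.choose_pos (by omega)
      have f1 : k * Nat.choose (k - 1) (j - 1) = Nat.choose k j * j := by
        have := Nat.add_one_mul_choose_eq (k - 1) (j - 1)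
        rw [show k - 1 + 1 = k by omega, show j - 1 + 1 = j by omega] at this
        exact this
      have f2 : Nat.choose (k - 1) (j - 1) * k = Nat.choose k (j - 1) * (k - j + 1) := by
        have := Nat.choose_mul_succ_eq (k - 1) (j - 1)
        rw [show k - 1 + 1 = k by omega] at this
        rw [this]
        congr 1
        omega
      have r1 : (k : ℝ) * (Nat.choose (k - 1) (j - 1) : ℝ)
          = (Nat.choose k j : ℝ) * j := by exact_mod_cast f1
      have hc1 : ((k - j + 1 : ℕ) : ℝ) = (k : ℝ) - j + 1 := by
        rw [Nat.cast_add, Nat.cast_sub hjk, Nat.cast_one]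
      have r2 : (Nat.choose (k - 1) (j - 1) : ℝ) * k
          = (Nat.choose k (j - 1) : ℝ) * ((k : ℝ) - j + 1) := by
        rw [← hc1]; exact_mod_cast f2
      have hA' : (Nat.choose (k - 1) (j - 1) : ℝ) ≠ 0 := by positivity
      have hB' : (Nat.choose k (j - 1) : ℝ) ≠ 0 := by positivity
      have hD' : (Nat.choose k j : ℝ) ≠ 0 := by positivity
      have hk' : (k : ℝ) ≠ 0 := ne_of_gt hkpos
      have hkA : (k : ℝ) * (Nat.choose (k - 1) (j - 1) : ℝ) ≠ 0 := by positivity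
      have g1 : l / (Nat.choose k j : ℝ)
          = l * j / ((k : ℝ) * (Nat.choose (k - 1) (j - 1) : ℝ)) := by
        rw [div_eq_div_iff hD' hkA]
        linear_combination l * r1
      have g2 : l / (Nat.choose k (j - 1) : ℝ)
          = l * ((k : ℝ) - j + 1) / ((k : ℝ) * (Nat.choose (k - 1) (j - 1) : ℝ)) := by
        rw [div_eq_div_iff hB' hkA]
        linear_combination l * r2
      rw [g1, g2]
      field_simp
      ring
  intro k j hk hkH hj hjk
  obtain ⟨l, hl, hw⟩ := aux (H - k) k hk (by omega)
  have e1 : w (j + 1) (k - j) = l / (Nat.choose (k - 1) j : ℝ) := by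
    have h1 : k + 1 - (j + 1) = k - j := by omega
    have := hw (j + 1) (by omega) (by omega)
    rw [h1] at this
    simpa using this
  have e2 : w j (k - j + 1) = l / (Nat.choose (k - 1) (j - 1) : ℝ) := by
    have h2 : k + 1 - j = k - j + 1 := by omega
    have := hw j hj (by omega)
    rw [h2] at this
    exact this
  rw [e1, e2]
  have hA : 0 < Nat.choose (k - 1) (j - 1) := Nat.choose_pos (by omega)
  have hD : 0 < Nat.choose (k - 1) j := Nat.choose_pos (by omega)
  have f3 : Nat.choose (k - 1) j * j = Nat.choose (k - 1) (j - 1) * (k - j) := by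
    have := Nat.choose_succ_right_eq (k - 1) (j - 1)
    rw [show j - 1 + 1 = j by omega] at this
    rw [this]
    congr 1
    omega
  have hc2 : ((k - j : ℕ) : ℝ) = (k : ℝ) - j := Nat.cast_sub (by omega)
  have r3 : (Nat.choose (k - 1) j : ℝ) * j
      = (Nat.choose (k - 1) (j - 1) : ℝ) * ((k : ℝ) - j) := by
    rw [← hc2]; exact_mod_cast f3
  have hA' : (Nat.choose (k - 1) (j - 1) : ℝ) ≠ 0 := by positivity
  have hD' : (Nat.choose (k - 1) j : ℝ) ≠ 0 := by positivity
  have hkj : (k : ℝ) - j ≠ 0 := by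
    have : (j : ℝ) < k := by exact_mod_cast (show j < k by omega)
    linarith
  have hl' : l ≠ 0 := ne_of_gt hl
  field_simp
  linear_combination -r3
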